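/- arXiv:math/0509568 — 2 statements merged into one kernel-verified Lean document; each statement's English description precedes it below -/
import Mathlib

section
/- If A is a suspension (or more generally a co-H-space), then the set G(A,X) of homotopy classes of cyclic maps A → X is a subgroup of the group [A,X]. -/
open ContinuousMap unitInterval

/-- The relation generating the reduced suspension of `(X, x₀)`:
collapse `X × {0}`, `X × {1}` and `{x₀} × I`. -/
inductive SuspRel (X : Type*) (x₀ : X) : X × I → X × I → Prop
  | zero (x y : X) : SuspRel X x₀ (x, 0) (y, 0)
  | one (x y : X) : SuspRel X x₀ (x, 1) (y, 1)
  | base (t : I) : SuspRel X x₀ (x₀, t) (x₀, 0)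

/-- The reduced suspension `ΣX`. -/
def Susp (X : Type*) [TopologicalSpace X] (x₀ : X) : Type _ := Quot (SuspRel X x₀)

instance {X : Type*} [TopologicalSpace X] (x₀ : X) : TopologicalSpace (Susp X x₀) :=
  inferInstanceAs (TopologicalSpace (Quot (SuspRel X x₀)))

/-- Points of the suspension. -/
def Susp.mk {X : Type*} [TopologicalSpace X] (x₀ : X) (x : X) (t : I) : Susp X x₀ :=
  Quot.mk _ (x, t)

/-- The basepoint of the suspension. -/
def Susp.pt {X : Type*} [TopologicalSpace X] (x₀ : X) : Susp X x₀ := Susp.mk x₀ x₀ 0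

/-- Clamp a real number into the unit interval. -/
noncomputable def toI (r : ℝ) : I := Set.projIcc 0 1 zero_le_one r
open ContinuousMap

/-- The wedge `X ∨ B`, modeled as the subspace `(X × {b₀}) ∪ ({x₀} × B)` of `X × B`. -/
def Wedge (X B : Type*) [TopologicalSpace X] [TopologicalSpace B] (x₀ : X) (b₀ : B) :=
  {z : X × B // z.1 = x₀ ∨ z.2 = b₀}

variable {X B : Type*} [TopologicalSpace X] [TopologicalSpace B] {x₀ : X} {b₀ : B}

instance : TopologicalSpace (Wedge X B x₀ b₀) :=
  inferInstanceAs (TopologicalSpace {z : X × B // z.1 = x₀ ∨ z.2 = b₀})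

namespace Wedge

/-- The basepoint of the wedge. -/
def pt : Wedge X B x₀ b₀ := ⟨(x₀, b₀), Or.inl rfl⟩

/-- Inclusion of the first wedge summand. -/
def inl : C(X, Wedge X B x₀ b₀) :=
  ⟨fun x => ⟨(x, b₀), Or.inr rfl⟩, by fun_prop⟩

/-- Inclusion of the second wedge summand. -/
def inr : C(B, Wedge X B x₀ b₀) :=
  ⟨fun b => ⟨(x₀, b), Or.inl rfl⟩, by fun_prop⟩

/-- Projection of the wedge onto the first summand (collapse `B`). -/
def p₁ : C(Wedge X B x₀ b₀, X) := ⟨fun z => z.1.1, by fun_prop⟩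

/-- Projection of the wedge onto the second summand (collapse `X`). -/
def p₂ : C(Wedge X B x₀ b₀, B) := ⟨fun z => z.1.2, by fun_prop⟩

/-- Inclusion of the wedge into the product. -/
def J : C(Wedge X B x₀ b₀, X × B) := ⟨Subtype.val, continuous_subtype_val⟩

end Wedge

def incl₁ {A X : Type*} [TopologicalSpace A] [TopologicalSpace X] (x₀ : X) : C(A, A × X) :=
  (ContinuousMap.id A).prodMk (ContinuousMap.const A x₀)

def incl₂ {A X : Type*} [TopologicalSpace A] [TopologicalSpace X] (a₀ : A) : C(X, A × X) :=
  (ContinuousMap.const X a₀).prodMk (ContinuousMap.id X)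

def IsAction {A X : Type*} [TopologicalSpace A] [TopologicalSpace X] (a₀ : A) (x₀ : X)
    (F : C(A × X, X)) (f : C(A, X)) : Prop :=
  (F.comp (incl₂ a₀)).HomotopicRel (ContinuousMap.id X) {x₀} ∧
  (F.comp (incl₁ x₀)).HomotopicRel f {a₀}

/-- `f : A → X` is cyclic if it admits an `f`-action. -/
def IsCyclicMap {A X : Type*} [TopologicalSpace A] [TopologicalSpace X] (a₀ : A) (x₀ : X)
    (f : C(A, X)) : Prop :=
  ∃ F : C(A × X, X), IsAction a₀ x₀ F f


section CyclicHelpers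

open ContinuousMap

variable {Y Z W : Type*} [TopologicalSpace Y] [TopologicalSpace Z] [TopologicalSpace W]

/-- Precomposition of a relative homotopy with a fixed continuous map. -/
def ContinuousMap.HomotopyRel.precomp {f₀ f₁ : C(Y, Z)} {S : Set Y}
    (F : f₀.HomotopyRel f₁ S) (g : C(W, Y)) {T : Set W} (hg : ∀ w ∈ T, g w ∈ S) :
    (f₀.comp g).HomotopyRel (f₁.comp g) T where
  toFun := fun p => F (p.1, g p.2)
  continuous_toFun := F.continuous.comp
    (continuous_fst.prodMk (g.continuous.comp continuous_snd))
  map_zero_left := fun w => F.apply_zero (g w)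
  map_one_left := fun w => F.apply_one (g w)
  prop' := fun t w hw => F.eq_fst t (hg w hw)

/-- The curried form of a homotopy that respects the suspension relation,
lifted to the suspension. -/
noncomputable def suspLift {A' : Type*} [TopologicalSpace A'] {a₀' : A'}
    (h : C(I × (A' × I), Z))
    (hr : ∀ p q, SuspRel A' a₀' p q → ∀ s, h (s, p) = h (s, q)) :
    C(Susp A' a₀', C(I, Z)) :=
  ⟨Quot.lift (fun p => (h.comp ⟨Prod.swap, continuous_swap⟩).curry p)
      (fun p q hpq => ContinuousMap.ext fun s => hr p q hpq s),
    continuous_quot_lift _ (map_continuous (h.comp ⟨Prod.swap, continuous_swap⟩).curry)⟩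

/-- Lift a homotopy defined on `I × (A' × I)` that respects the suspension relation
to a homotopy defined on `I × Susp A' a₀'`. -/
noncomputable def suspHomotopyMk {A' : Type*} [TopologicalSpace A'] {a₀' : A'}
    (h : C(I × (A' × I), Z))
    (hr : ∀ p q, SuspRel A' a₀' p q → ∀ s, h (s, p) = h (s, q)) :
    C(I × Susp A' a₀', Z) :=
  (ContinuousMap.uncurry (suspLift h hr)).comp ⟨Prod.swap, continuous_swap⟩

theorem suspLift_mk {A' : Type*} [TopologicalSpace A'] {a₀' : A'}
    (h : C(I × (A' × I), Z))
    (hr : ∀ p q, SuspRel A' a₀' p q → ∀ s, h (s, p) = h (s, q)) (p : A' × I) :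
    suspLift h hr (Quot.mk _ p) = (h.comp ⟨Prod.swap, continuous_swap⟩).curry p := rfl

theorem suspHomotopyMk_apply {A' : Type*} [TopologicalSpace A'] {a₀' : A'}
    (h : C(I × (A' × I), Z))
    (hr : ∀ p q, SuspRel A' a₀' p q → ∀ s, h (s, p) = h (s, q)) (s : I) (p : A' × I) :
    suspHomotopyMk h hr (s, Quot.mk _ p) = h (s, p) := by
  have e : suspHomotopyMk h hr (s, Quot.mk _ p) = suspLift h hr (Quot.mk _ p) s := rfl
  rw [e, suspLift_mk]
  rfl

theorem toI_of_nonpos {r : ℝ} (hr : r ≤ 0) : toI r = 0 :=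
  Subtype.ext (by rw [toI, Set.projIcc_of_le_left _ hr]; rfl)

theorem toI_of_one_le {r : ℝ} (hr : 1 ≤ r) : toI r = 1 :=
  Subtype.ext (by rw [toI, Set.projIcc_of_right_le _ hr]; rfl)

end CyclicHelpers


/-- If `A = ΣA'` is a suspension, then the set of cyclic maps `G(A,X)` is a subgroup
of the group `[A,X]`: it contains the constant map, and it is closed under the
group operation `f ⊕ g = (f|g) ∘ ν` induced by the pinch comultiplication `ν`, and
under the inverse `f ↦ f ∘ ι`, where `ι` reverses the suspension coordinate. -/
theorem cyclic_subgroup {A' X : Type*} [TopologicalSpace A'] [TopologicalSpace X]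
    (a₀' : A') (x₀ : X)
    (ν : C(Susp A' a₀', Wedge (Susp A' a₀') (Susp A' a₀') (Susp.pt a₀') (Susp.pt a₀')))
    (hν : ∀ (x : A') (t : I), ν (Susp.mk a₀' x t) =
      if (t : ℝ) ≤ 1 / 2 then Wedge.inl (Susp.mk a₀' x (toI (2 * (t : ℝ))))
      else Wedge.inr (Susp.mk a₀' x (toI (2 * (t : ℝ) - 1))))
    (ι : C(Susp A' a₀', Susp A' a₀'))
    (hι : ∀ (x : A') (t : I), ι (Susp.mk a₀' x t) = Susp.mk a₀' x (unitInterval.symm t)) :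
    IsCyclicMap (Susp.pt a₀') x₀ (ContinuousMap.const (Susp A' a₀') x₀) ∧
    (∀ (f g : C(Susp A' a₀', X)), IsCyclicMap (Susp.pt a₀') x₀ f → IsCyclicMap (Susp.pt a₀') x₀ g →
      ∀ q : C(Wedge (Susp A' a₀') (Susp A' a₀') (Susp.pt a₀') (Susp.pt a₀'), X),
        q.comp Wedge.inl = f → q.comp Wedge.inr = g →
        IsCyclicMap (Susp.pt a₀') x₀ (q.comp ν)) ∧
    (∀ f : C(Susp A' a₀', X), IsCyclicMap (Susp.pt a₀') x₀ f →
      IsCyclicMap (Susp.pt a₀') x₀ (f.comp ι)) := by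
  classical
  have c0 : ((0 : I) : ℝ) = 0 := rfl
  have c1 : ((1 : I) : ℝ) = 1 := rfl
  -- basic facts about the suspension basepoint
  have mkz : ∀ x : A', Susp.mk a₀' x 0 = Susp.pt a₀' := fun x =>
    Quot.sound (SuspRel.zero x a₀')
  have mko : ∀ x : A', Susp.mk a₀' x 1 = Susp.pt a₀' := fun x =>
    (Quot.sound (SuspRel.one x a₀')).trans (Quot.sound (SuspRel.base 1))
  have mkb : ∀ t : I, Susp.mk a₀' a₀' t = Susp.pt a₀' := fun t =>
    Quot.sound (SuspRel.base t)
  -- formulas for the two coordinates of the pinch map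
  have nu1 : ∀ (x : A') (t : I),
      Wedge.p₁ (ν (Susp.mk a₀' x t)) = Susp.mk a₀' x (toI (2 * (t : ℝ))) := by
    intro x t
    rw [hν]
    split_ifs with h
    · rfl
    · show Susp.pt a₀' = _
      rw [toI_of_one_le (by linarith [not_le.1 h]), mko]
  have nu2 : ∀ (x : A') (t : I),
      Wedge.p₂ (ν (Susp.mk a₀' x t)) = Susp.mk a₀' x (toI (2 * (t : ℝ) - 1)) := by
    intro x t
    rw [hν]
    split_ifs with h
    · show Susp.pt a₀' = _
      rw [toI_of_nonpos (by linarith), mkz]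
    · rfl
  have nupt1 : Wedge.p₁ (ν (Susp.pt a₀')) = Susp.pt a₀' := by
    have := nu1 a₀' 0
    rw [mkz, mkb] at this
    exact this
  have nupt2 : Wedge.p₂ (ν (Susp.pt a₀')) = Susp.pt a₀' := by
    have := nu2 a₀' 0
    rw [mkz, mkb] at this
    exact this
  refine ⟨?_, ?_, ?_⟩
  · -- the constant map is cyclic, with action the projection
    refine ⟨ContinuousMap.snd, ?_, ?_⟩
    · have e : ContinuousMap.snd.comp (incl₂ (Susp.pt a₀')) = ContinuousMap.id X := by
        ext x; rfl
      rw [e]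
      exact ContinuousMap.HomotopicRel.refl _
    · have e : ContinuousMap.snd.comp (incl₁ x₀) =
          ContinuousMap.const (Susp A' a₀') x₀ := by ext a; rfl
      rw [e]
      exact ContinuousMap.HomotopicRel.refl _
  · -- closure under the co-H sum
    rintro f g ⟨F, hF2, hF1⟩ ⟨G, hG2, hG1⟩ q hq1 hq2
    obtain ⟨M⟩ := hF2
    obtain ⟨K⟩ := hF1
    obtain ⟨N⟩ := hG2
    obtain ⟨L⟩ := hG1
    have hx : x₀ ∈ ({x₀} : Set X) := rfl
    have hp : Susp.pt a₀' ∈ ({Susp.pt a₀'} : Set (Susp A' a₀')) := rfl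
    have Fpt : F (Susp.pt a₀', x₀) = x₀ := M.fst_eq_snd hx
    have Gpt : G (Susp.pt a₀', x₀) = x₀ := N.fst_eq_snd hx
    have fpt : f (Susp.pt a₀') = x₀ := (K.fst_eq_snd hp).symm.trans Fpt
    have gpt : g (Susp.pt a₀') = x₀ := (L.fst_eq_snd hp).symm.trans Gpt
    -- the combined action
    set H : C(Susp A' a₀' × X, X) :=
      F.comp (((Wedge.p₁.comp ν).comp ContinuousMap.fst).prodMk
        (G.comp (((Wedge.p₂.comp ν).comp ContinuousMap.fst).prodMk
          ContinuousMap.snd))) with hH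
    refine ⟨H, ?_, ?_⟩
    · -- H restricted to X is homotopic to the identity
      have e : H.comp (incl₂ (Susp.pt a₀')) =
          (F.comp (incl₂ (Susp.pt a₀'))).comp (G.comp (incl₂ (Susp.pt a₀'))) := by
        ext x
        show F (Wedge.p₁ (ν (Susp.pt a₀')), G (Wedge.p₂ (ν (Susp.pt a₀')), x)) =
          F (Susp.pt a₀', G (Susp.pt a₀', x))
        rw [nupt1, nupt2]
      rw [e]
      have step1 := (M.precomp (G.comp (incl₂ (Susp.pt a₀')))
        (fun w hw => by
          rw [Set.mem_singleton_iff] at hw ⊢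
          rw [hw]
          exact Gpt)).cast rfl (ContinuousMap.id_comp _)
      exact ⟨step1.trans N⟩
    · -- H restricted to the suspension is homotopic to q ∘ ν
      -- right-hand side homotopy: from b ↦ F (pt, G (b, x₀)) to g
      set k : C(X, X) := F.comp (incl₂ (Susp.pt a₀')) with hk
      set ρ : C(Susp A' a₀', X) := k.comp (G.comp (incl₁ x₀)) with hρ
      have R₂ := (M.precomp g (fun w hw => by
        rw [Set.mem_singleton_iff] at hw ⊢
        rw [hw]
        exact gpt)).cast rfl (ContinuousMap.id_comp g)
      set R : ρ.HomotopyRel g {Susp.pt a₀'} := (L.compContinuousMap k).trans R₂ with hR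
      -- value facts
      have Kpt : ∀ s : I, K (s, Susp.pt a₀') = F (Susp.pt a₀', x₀) := fun s =>
        K.eq_fst s hp
      have Rpt : ∀ s : I, R (s, Susp.pt a₀') = F (Susp.pt a₀', x₀) := fun s => by
        have h2 := R.eq_fst s hp
        rw [h2]
        show F (Susp.pt a₀', G (Susp.pt a₀', x₀)) = _
        rw [Gpt]
      -- the raw pasted homotopy on I × (A' × I)
      set rawfun : I × (A' × I) → X := fun z =>
        if (z.2.2 : ℝ) ≤ 1 / 2 then K (z.1, Susp.mk a₀' z.2.1 (toI (2 * (z.2.2 : ℝ))))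
        else R (z.1, Susp.mk a₀' z.2.1 (toI (2 * (z.2.2 : ℝ) - 1))) with hraw
      have contmk : Continuous fun p : A' × I => (Quot.mk (SuspRel A' a₀') p : Susp A' a₀') :=
        continuous_quot_mk
      have cont_left : Continuous fun z : I × (A' × I) =>
          K (z.1, Susp.mk a₀' z.2.1 (toI (2 * ((z.2.2 : I) : ℝ)))) := by
        apply K.continuous.comp
        apply continuous_fst.prodMk
        apply contmk.comp
        apply (continuous_fst.comp continuous_snd).prodMk
        exact continuous_projIcc.comp
          (continuous_const.mul (continuous_subtype_val.comp (continuous_snd.comp continuous_snd)))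
      have cont_right : Continuous fun z : I × (A' × I) =>
          R (z.1, Susp.mk a₀' z.2.1 (toI (2 * ((z.2.2 : I) : ℝ) - 1))) := by
        apply R.continuous.comp
        apply continuous_fst.prodMk
        apply contmk.comp
        apply (continuous_fst.comp continuous_snd).prodMk
        exact continuous_projIcc.comp
          ((continuous_const.mul (continuous_subtype_val.comp
            (continuous_snd.comp continuous_snd))).sub continuous_const)
      have cont_raw : Continuous rawfun := by
        rw [hraw]
        apply Continuous.if_le cont_left cont_right (by fun_prop) continuous_const
        intro z hz
        have h1 : toI (2 * ((z.2.2 : I) : ℝ)) = 1 := toI_of_one_le (by rw [hz]; norm_num)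
        have h0 : toI (2 * ((z.2.2 : I) : ℝ) - 1) = 0 := toI_of_nonpos (by rw [hz]; norm_num)
        rw [h1, h0, mko, mkz, Kpt, Rpt]
      set raw : C(I × (A' × I), X) := ⟨rawfun, cont_raw⟩ with hrawc
      have rawapp : ∀ (s : I) (p : A' × I), raw (s, p) = rawfun (s, p) := fun s p => rfl
      have hr : ∀ p p', SuspRel A' a₀' p p' → ∀ s, raw (s, p) = raw (s, p') := by
        intro p p' hpp' s
        cases hpp' with
        | zero x y =>
          rw [rawapp, rawapp]
          simp only [hraw]
          rw [if_pos (show ((0 : I) : ℝ) ≤ 1 / 2 by rw [c0]; norm_num),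
            if_pos (show ((0 : I) : ℝ) ≤ 1 / 2 by rw [c0]; norm_num)]
          rw [show toI (2 * ((0 : I) : ℝ)) = 0 from toI_of_nonpos (by rw [c0]; norm_num)]
          rw [mkz, mkz]
        | one x y =>
          rw [rawapp, rawapp]
          simp only [hraw]
          rw [if_neg (show ¬ ((1 : I) : ℝ) ≤ 1 / 2 by rw [c1]; norm_num),
            if_neg (show ¬ ((1 : I) : ℝ) ≤ 1 / 2 by rw [c1]; norm_num)]
          rw [show toI (2 * ((1 : I) : ℝ) - 1) = 1 from toI_of_one_le (by rw [c1]; norm_num)]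
          rw [mko, mko]
        | base t =>
          rw [rawapp, rawapp]
          simp only [hraw]
          rw [if_pos (show ((0 : I) : ℝ) ≤ 1 / 2 by rw [c0]; norm_num)]
          rw [show toI (2 * ((0 : I) : ℝ)) = 0 from toI_of_nonpos (by rw [c0]; norm_num)]
          rw [mkz, Kpt]
          split_ifs with h1
          · rw [mkb, Kpt]
          · rw [mkb, Rpt]
      set Ψc : C(I × Susp A' a₀', X) := suspHomotopyMk raw hr with hΨc
      have Ψapp : ∀ (s : I) (p : A' × I), Ψc (s, Quot.mk _ p) = rawfun (s, p) := fun s p =>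
        suspHomotopyMk_apply raw hr s p
      -- compute the endpoints
      have hzero : ∀ a : Susp A' a₀', Ψc (0, a) = (H.comp (incl₁ x₀)) a := by
        intro a
        refine Quot.inductionOn (motive := fun a => Ψc (0, a) = (H.comp (incl₁ x₀)) a) a (fun p => ?_)
        obtain ⟨x, t⟩ := p
        rw [Ψapp 0 (x, t)]
        show _ = F (Wedge.p₁ (ν (Susp.mk a₀' x t)),
          G (Wedge.p₂ (ν (Susp.mk a₀' x t)), x₀))
        rw [nu1, nu2]
        simp only [hraw]
        split_ifs with h
        · have h0 : toI (2 * (t : ℝ) - 1) = 0 := toI_of_nonpos (by linarith)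
          rw [h0, mkz, Gpt, K.apply_zero]
          rfl
        · have h1 : toI (2 * (t : ℝ)) = 1 := toI_of_one_le (by linarith [not_le.1 h])
          rw [h1, mko, R.apply_zero]
          rfl
      have hone : ∀ a : Susp A' a₀', Ψc (1, a) = (q.comp ν) a := by
        intro a
        refine Quot.inductionOn (motive := fun a => Ψc (1, a) = (q.comp ν) a) a (fun p => ?_)
        obtain ⟨x, t⟩ := p
        rw [Ψapp 1 (x, t)]
        show _ = q (ν (Susp.mk a₀' x t))
        rw [hν]
        simp only [hraw]
        split_ifs with h
        · rw [K.apply_one]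
          show f _ = (q.comp Wedge.inl) _
          rw [hq1]
        · rw [R.apply_one]
          show g _ = (q.comp Wedge.inr) _
          rw [hq2]
      have hrel : ∀ (s : I), ∀ a ∈ ({Susp.pt a₀'} : Set (Susp A' a₀')),
          Ψc (s, a) = (H.comp (incl₁ x₀)) a := by
        intro s a ha
        rw [Set.mem_singleton_iff] at ha
        subst ha
        rw [show Ψc (s, Susp.pt a₀') = rawfun (s, (a₀', 0)) from Ψapp s (a₀', 0)]
        show _ = F (Wedge.p₁ (ν (Susp.pt a₀')),
          G (Wedge.p₂ (ν (Susp.pt a₀')), x₀))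
        rw [nupt1, nupt2, Gpt]
        simp only [hraw]
        rw [if_pos (show ((0 : I) : ℝ) ≤ 1 / 2 by rw [c0]; norm_num)]
        rw [show toI (2 * ((0 : I) : ℝ)) = 0 from toI_of_nonpos (by rw [c0]; norm_num)]
        rw [mkz, Kpt]
      exact ⟨⟨{ toFun := Ψc
                continuous_toFun := Ψc.continuous
                map_zero_left := hzero
                map_one_left := hone }, hrel⟩⟩
  · -- closure under the inverse
    rintro f ⟨F, hF2, hF1⟩
    obtain ⟨M⟩ := hF2
    obtain ⟨K⟩ := hF1
    have ιpt : ι (Susp.pt a₀') = Susp.pt a₀' := by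
      show ι (Susp.mk a₀' a₀' 0) = _
      rw [hι]
      exact mkb _
    refine ⟨F.comp ((ι.comp ContinuousMap.fst).prodMk ContinuousMap.snd), ?_, ?_⟩
    · have e : (F.comp ((ι.comp ContinuousMap.fst).prodMk ContinuousMap.snd)).comp
          (incl₂ (Susp.pt a₀')) = F.comp (incl₂ (Susp.pt a₀')) := by
        ext x
        show F (ι (Susp.pt a₀'), x) = F (Susp.pt a₀', x)
        rw [ιpt]
      rw [e]
      exact ⟨M⟩
    · have e : (F.comp ((ι.comp ContinuousMap.fst).prodMk ContinuousMap.snd)).comp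
          (incl₁ x₀) = (F.comp (incl₁ x₀)).comp ι := by
        ext a; rfl
      rw [e]
      exact ⟨K.precomp ι (fun w hw => by
        rw [Set.mem_singleton_iff] at hw ⊢
        rw [hw, ιpt])⟩
end

section
/- Let F : A × X → X be an f-action and let (W,n) be a co-H-space. Then for all a ∈ [W,A] and h ∈ [W,X], the element a·h := F ∘ (a × h) ∘ Δ equals f_*(a) ⊕_n h, where ⊕_n is the binary operation on [W,X] induced by the comultiplication n. -/
open ContinuousMap

variable {X B : Type*} [TopologicalSpace X] [TopologicalSpace B] {x₀ : X} {b₀ : B}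

def IsComul {W : Type*} [TopologicalSpace W] (w₀ : W) (n : C(W, Wedge W W w₀ w₀)) : Prop :=
  (Wedge.p₁.comp n).HomotopicRel (ContinuousMap.id W) {w₀} ∧
  (Wedge.p₂.comp n).HomotopicRel (ContinuousMap.id W) {w₀}

/-- The fold map `X ∨ X → X` on the subspace wedge.  It is continuous for an
arbitrary topological space `X` (no separation assumptions needed). -/
noncomputable def wedgeFold (X : Type*) [TopologicalSpace X] (x₀ : X) :
    C(Wedge X X x₀ x₀, X) where
  toFun z := open Classical in if z.1.2 = x₀ then z.1.1 else z.1.2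
  continuous_toFun := by
    classical
    rw [continuous_def]
    intro V hV
    by_cases hx : x₀ ∈ V
    · have hset : (fun z : Wedge X X x₀ x₀ =>
          if z.1.2 = x₀ then z.1.1 else z.1.2) ⁻¹' V = Subtype.val ⁻¹' (V ×ˢ V) := by
        ext ⟨⟨u, v⟩, hz⟩
        change (if v = x₀ then u else v) ∈ V ↔ (u ∈ V ∧ v ∈ V)
        by_cases hv : v = x₀
        · subst hv; simp [hx]
        · have hu : u = x₀ := hz.resolve_right hv
          subst hu; simp [hv, hx]
      rw [hset]
      exact (hV.prod hV).preimage continuous_subtype_val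
    · have hset : (fun z : Wedge X X x₀ x₀ =>
          if z.1.2 = x₀ then z.1.1 else z.1.2) ⁻¹' V
            = Subtype.val ⁻¹' (V ×ˢ (Set.univ : Set X) ∪ (Set.univ : Set X) ×ˢ V) := by
        ext ⟨⟨u, v⟩, hz⟩
        change (if v = x₀ then u else v) ∈ V ↔
          ((u ∈ V ∧ v ∈ (Set.univ : Set X)) ∨ (u ∈ (Set.univ : Set X) ∧ v ∈ V))
        simp only [Set.mem_univ, and_true, true_and]
        by_cases hv : v = x₀
        · subst hv
          simp only [if_pos rfl]
          constructor
          · exact Or.inl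
          · rintro (h | h)
            · exact h
            · exact absurd h hx
        · have hu : u = x₀ := hz.resolve_right hv
          subst hu
          simp only [if_neg hv]
          constructor
          · exact Or.inr
          · rintro (h | h)
            · exact absurd h hx
            · exact h
      rw [hset]
      exact ((hV.prod isOpen_univ).union (isOpen_univ.prod hV)).preimage
        continuous_subtype_val

theorem wedgeFold_eq_fst {X : Type*} [TopologicalSpace X] {x₀ : X}
    {u v : X} (huv : u = x₀ ∨ v = x₀) (hz : v = x₀) :
    wedgeFold X x₀ ⟨(u, v), huv⟩ = u := by
  simp [wedgeFold, hz]

theorem wedgeFold_eq_snd {X : Type*} [TopologicalSpace X] {x₀ : X}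
    {u v : X} (huv : u = x₀ ∨ v = x₀) (hz : u = x₀) :
    wedgeFold X x₀ ⟨(u, v), huv⟩ = v := by
  classical
  simp only [wedgeFold, ContinuousMap.coe_mk]
  split_ifs with hv
  · rw [hz, hv]
  · rfl

/-- If `F` is an `f`-action and `(W,n)` is a co-H-space, then for based maps
`a : W → A`, `h : W → X` we have `a·h = f_*(a) ⊕ₙ h` in `[W,X]`.  Here
`a·h = F ∘ (a × h) ∘ Δ = F ∘ (a,h)`, and `f_*(a) ⊕ₙ h = (f∘a | h) ∘ n`, where
`q = (f∘a | h)` is any map on the wedge restricting to `f∘a` and `h`. -/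
theorem action_operation_coH {A X W : Type*} [TopologicalSpace A] [TopologicalSpace X]
    [TopologicalSpace W] (a₀ : A) (x₀ : X) (w₀ : W)
    (F : C(A × X, X)) (f : C(A, X)) (hF : IsAction a₀ x₀ F f)
    (n : C(W, Wedge W W w₀ w₀)) (hn : IsComul w₀ n)
    (a : C(W, A)) (ha : a w₀ = a₀) (h : C(W, X)) (hh : h w₀ = x₀)
    (q : C(Wedge W W w₀ w₀, X))
    (hq₁ : q.comp Wedge.inl = f.comp a) (hq₂ : q.comp Wedge.inr = h) :
    (F.comp (a.prodMk h)).HomotopicRel (q.comp n) {w₀} := by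
  obtain ⟨L⟩ := hF.1
  obtain ⟨K⟩ := hF.2
  obtain ⟨P₁⟩ := hn.1
  obtain ⟨P₂⟩ := hn.2
  -- basic pointed facts
  have hFa₀x₀ : F (a₀, x₀) = x₀ := by
    have h1 := L.eq_fst 0 (Set.mem_singleton x₀)
    have h2 := L.eq_snd 0 (Set.mem_singleton x₀)
    rw [h1] at h2
    simpa [incl₂] using h2
  have hfa₀ : f a₀ = x₀ := by
    have h1 := K.eq_fst 0 (Set.mem_singleton a₀)
    have h2 := K.eq_snd 0 (Set.mem_singleton a₀)
    rw [h1] at h2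
    simp only [ContinuousMap.comp_apply, incl₁] at h2
    rw [← h2]
    simpa using hFa₀x₀
  have hn₁ : (n w₀).1.1 = w₀ := by
    have h1 := P₁.eq_fst 0 (Set.mem_singleton w₀)
    have h2 := P₁.eq_snd 0 (Set.mem_singleton w₀)
    rw [h1] at h2
    simpa [Wedge.p₁] using h2
  have hn₂ : (n w₀).1.2 = w₀ := by
    have h1 := P₂.eq_fst 0 (Set.mem_singleton w₀)
    have h2 := P₂.eq_snd 0 (Set.mem_singleton w₀)
    rw [h1] at h2
    simpa [Wedge.p₂] using h2
  -- K at a₀ and L at x₀ are constantly x₀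
  have hK : ∀ t : unitInterval, K (t, a₀) = x₀ := by
    intro t
    have := K.eq_snd t (Set.mem_singleton a₀)
    rw [this, hfa₀]
  have hL : ∀ t : unitInterval, L (t, x₀) = x₀ := by
    intro t
    have := L.eq_snd t (Set.mem_singleton x₀)
    simpa using this
  -- the middle map
  set m : C(W, X) :=
    F.comp ((a.comp (Wedge.p₁.comp n)).prodMk (h.comp (Wedge.p₂.comp n))) with hm
  -- First homotopy: F ∘ (a, h) ≃ m rel {w₀}
  have H₁ : (F.comp (a.prodMk h)).HomotopicRel m {w₀} := by
    refine ⟨(ContinuousMap.HomotopyRel.symm ?_)⟩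
    exact
      { toFun := fun p => F (a (P₁ p), h (P₂ p))
        continuous_toFun := by fun_prop
        map_zero_left := fun w => by
          have e1 : P₁ (0, w) = (Wedge.p₁.comp n) w := P₁.apply_zero w
          have e2 : P₂ (0, w) = (Wedge.p₂.comp n) w := P₂.apply_zero w
          show F (a (P₁ (0, w)), h (P₂ (0, w))) = m w
          rw [e1, e2]
          rfl
        map_one_left := fun w => by simp
        prop' := by
          intro t w hw
          have hww : w = w₀ := hw
          have e₁ : P₁ (t, w) = w := by
            have := P₁.eq_snd t hw
            simpa using this
          have e₂ : P₂ (t, w) = w := by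
            have := P₂.eq_snd t hw
            simpa using this
          simp only [ContinuousMap.coe_mk]
          rw [e₁, e₂, hww]
          simp [hm, Wedge.p₁, Wedge.p₂, hn₁, hn₂] }
  -- Second homotopy: m ≃ q ∘ n rel {w₀}
  have H₂ : m.HomotopicRel (q.comp n) {w₀} := by
    refine ⟨?_⟩
    have valid : ∀ (p : unitInterval × W),
        (K (p.1, a (n p.2).1.1) = x₀) ∨ (L (p.1, h (n p.2).1.2) = x₀) := by
      rintro ⟨t, w⟩
      rcases (n w).2 with hc | hc
      · left
        simp only [hc, ha]
        exact hK t
      · right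
        simp only [hc, hh]
        exact hL t
    exact
      { toFun := fun p => wedgeFold X x₀
          ⟨(K (p.1, a (n p.2).1.1), L (p.1, h (n p.2).1.2)), valid p⟩
        continuous_toFun := by
          apply (wedgeFold X x₀).continuous.comp
          apply Continuous.subtype_mk
          fun_prop
        map_zero_left := fun w => by
          dsimp only
          rcases (n w).2 with hc | hc
          · -- first coordinate of n w is w₀ : use snd
            have pf : K ((0 : unitInterval), a (n w).1.1) = x₀ := by
              rw [hc, ha]; exact hK 0
            rw [wedgeFold_eq_snd _ pf, L.apply_zero]
            simp [hm, Wedge.p₁, Wedge.p₂, hc, ha, incl₂]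
          · -- second coordinate of n w is w₀ : use fst
            have pf : L ((0 : unitInterval), h (n w).1.2) = x₀ := by
              rw [hc, hh]; exact hL 0
            rw [wedgeFold_eq_fst _ pf, K.apply_zero]
            simp [hm, Wedge.p₁, Wedge.p₂, hc, hh, incl₁]
        map_one_left := fun w => by
          dsimp only
          rcases (n w).2 with hc | hc
          · -- n w = inr of its second coordinate
            have pf : K ((1 : unitInterval), a (n w).1.1) = x₀ := by
              rw [hc, ha]; exact hK 1
            rw [wedgeFold_eq_snd _ pf, L.apply_one]
            have hnw : n w = Wedge.inr ((n w).1.2) := by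
              apply Subtype.ext
              apply Prod.ext
              · exact hc
              · rfl
            have h2 := congrArg (fun g : C(W, X) => g ((n w).1.2)) hq₂
            simp only [ContinuousMap.comp_apply] at h2
            simp only [ContinuousMap.comp_apply]
            rw [hnw, h2]
            rfl
          · -- n w = inl of its first coordinate
            have pf : L ((1 : unitInterval), h (n w).1.2) = x₀ := by
              rw [hc, hh]; exact hL 1
            rw [wedgeFold_eq_fst _ pf, K.apply_one]
            have hnw : n w = Wedge.inl ((n w).1.1) := by
              apply Subtype.ext
              apply Prod.ext
              · rfl
              · exact hc
            have h2 := congrArg (fun g : C(W, X) => g ((n w).1.1)) hq₁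
            simp only [ContinuousMap.comp_apply] at h2
            simp only [ContinuousMap.comp_apply]
            rw [hnw, h2]
            rfl
        prop' := by
          intro t w hw
          have hww : w = w₀ := hw
          simp only [ContinuousMap.coe_mk]
          have e₁ : K (t, a (n w).1.1) = x₀ := by
            rw [hww, hn₁, ha]; exact hK t
          have e₂ : L (t, h (n w).1.2) = x₀ := by
            rw [hww, hn₂, hh]; exact hL t
          rw [wedgeFold_eq_fst _ e₂, e₁, hww]
          simp [hm, Wedge.p₁, Wedge.p₂, hn₁, hn₂, ha, hh, hFa₀x₀] }
  exact H₁.trans H₂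
end
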